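/- arXiv:1504.07108 — 5 statements merged into one kernel-verified Lean document; each statement's English description precedes it below -/
import Mathlib

section
/- Let n ≥ 2 and let p, a_1, a_2, t be nonzero complex numbers with |p| < 1, generic so that all theta denominators appearing in the fundamental invariants are nonzero. For 0 ≤ r ≤ n and z = (z_1, …, z_n) ∈ (ℂ*)^n, writing z' = (z_1, …, z_{n−1}), the fundamental invariants satisfy the recurrence E_r^{(n)}(a_1, a_2; z) = E_{r−1}^{(n−1)}(a_1, a_2; z') · θ(a_2 t^{n−r} z_n^{±1}; p)/θ(a_2 t^{n−r} (a_1 t^{r−1})^{±1}; p) + E_r^{(n−1)}(a_1, a_2; z') · θ(a_1 t^r z_n^{±1}; p)/θ(a_1 t^r (a_2 t^{n−r−1})^{±1}; p), with the conventions E_{−1}^{(n−1)} = 0 and E_n^{(n−1)} = 0. -/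
open Finset

/-- The theta function `θ(z;p) = ∏_{i≥0} (1 - p^i z)(1 - p^{i+1}/z)`. -/
noncomputable def theta (p z : ℂ) : ℂ :=
  ∏' i : ℕ, ((1 - p ^ i * z) * (1 - p ^ (i + 1) * z⁻¹))

/-- The theta shifted factorial `θ(z;p;q)_k = ∏_{j=0}^{k-1} θ(q^j z;p)`. -/
noncomputable def thetaPoch (p q z : ℂ) (k : ℕ) : ℂ :=
  ∏ j ∈ Finset.range k, theta p (q ^ j * z)

/-- `θ(x u^{±1};p) = θ(xu;p) θ(x/u;p)`. -/
noncomputable def thetaPm (p x u : ℂ) : ℂ :=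
  theta p (x * u) * theta p (x * u⁻¹)

/-- The fundamental `BC_n` invariant `E_r(a₁,a₂;z)`, as a sum over the subsets
`S = {i_1 < … < i_r}` of `{0,…,n-1}` (0-based indexing); for `i ∈ S`,
`(S.filter (· < i)).card` is the (0-based) rank of `i` in `S`. -/
noncomputable def Efun (p t a₁ a₂ : ℂ) {n : ℕ} (r : ℕ) (z : Fin n → ℂ) : ℂ :=
  ∑ S ∈ Finset.powersetCard r (Finset.univ : Finset (Fin n)),
    (∏ i ∈ S,
        thetaPm p (a₂ * t ^ ((i : ℕ) - (S.filter (fun j => j < i)).card)) (z i) /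
          thetaPm p (a₂ * t ^ ((i : ℕ) - (S.filter (fun j => j < i)).card))
            (a₁ * t ^ (S.filter (fun j => j < i)).card)) *
    (∏ i ∈ Sᶜ,
        thetaPm p (a₁ * t ^ ((i : ℕ) - (Sᶜ.filter (fun j => j < i)).card)) (z i) /
          thetaPm p (a₁ * t ^ ((i : ℕ) - (Sᶜ.filter (fun j => j < i)).card))
            (a₂ * t ^ (Sᶜ.filter (fun j => j < i)).card))

/-- Genericity: all theta denominators appearing in the fundamental invariants are nonzero. -/
def eDenomsNZ (p t a₁ a₂ : ℂ) (n : ℕ) : Prop :=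
  ∀ k l : ℕ, k < n → l < n →
    thetaPm p (a₂ * t ^ k) (a₁ * t ^ l) ≠ 0 ∧ thetaPm p (a₁ * t ^ k) (a₂ * t ^ l) ≠ 0

/-- The reference point `ζ^{(s)} = (a₁, a₁t, …, a₁ t^{s-1}, a₂, a₂ t, …, a₂ t^{n-s-1})`. -/
noncomputable def zetaPt (a₁ a₂ t : ℂ) (n s : ℕ) : Fin n → ℂ :=
  fun i => if (i : ℕ) < s then a₁ * t ^ (i : ℕ) else a₂ * t ^ ((i : ℕ) - s)

/-- `F_i^+(z)`. -/
noncomputable def Fplus (p t : ℂ) (a : Fin 6 → ℂ) {n : ℕ} (i : Fin n) (z : Fin n → ℂ) : ℂ :=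
  ((∏ m : Fin 6, theta p (a m * z i)) / ((z i) ^ 2 * theta p ((z i) ^ 2))) *
    ∏ j ∈ Finset.univ.erase i, thetaPm p (t * z i) (z j) / thetaPm p (z i) (z j)

/-- `F_i^-(z) = F_i^+(z_1, …, z_i⁻¹, …, z_n)`. -/
noncomputable def Fminus (p t : ℂ) (a : Fin 6 → ℂ) {n : ℕ} (i : Fin n) (z : Fin n → ℂ) : ℂ :=
  Fplus p t a i (Function.update z i (z i)⁻¹)

/-- None of the theta denominators of `F_i^+` vanishes at `z`. -/
def FplusDenomNZ (p : ℂ) {n : ℕ} (i : Fin n) (z : Fin n → ℂ) : Prop :=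
  theta p ((z i) ^ 2) ≠ 0 ∧ ∀ j, j ≠ i → thetaPm p (z i) (z j) ≠ 0

/-- None of the theta denominators of `F_i^-` vanishes at `z`. -/
def FminusDenomNZ (p : ℂ) {n : ℕ} (i : Fin n) (z : Fin n → ℂ) : Prop :=
  FplusDenomNZ p i (Function.update z i (z i)⁻¹)

/-- `h_r(z) = Σ_i (F_i^-(z) + F_i^+(z)) E_{r-1}^{(n-1)}(z_1,…,ẑ_i,…,z_n)`, in `n+1` variables. -/
noncomputable def hFun (p t : ℂ) (a : Fin 6 → ℂ) (n r : ℕ) (z : Fin (n + 1) → ℂ) : ℂ :=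
  ∑ i : Fin (n + 1),
    (Fminus p t a i z + Fplus p t a i z) *
      Efun p t (a 0) (a 1) (r - 1) (fun j : Fin n => z (i.succAbove j))

/-- The base point `ξ = (a₁, a₁ t, …, a₁ t^{n-1})`. -/
noncomputable def xiPt (a₁ t : ℂ) (n : ℕ) : Fin n → ℂ := fun i => a₁ * t ^ (i : ℕ)

/-- The weight `W(ν) = Φ(q^ν ξ)/Φ(ξ)` of the truncated Jackson integral. -/
noncomputable def weight (p q t : ℂ) (a : Fin 6 → ℂ) (n : ℕ) (ν : Fin n → ℕ) : ℂ :=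
  (∏ i : Fin n,
      (q ^ 2 * (a 0 * a 1 * a 2 * a 3 * a 4 * a 5 * t ^ (2 * n - 2))⁻¹ *
            t ^ (2 * (n - 1 - (i : ℕ)))) ^ ν i *
        theta p (q ^ (2 * ν i) * xiPt (a 0) t n i ^ 2) / theta p (xiPt (a 0) t n i ^ 2)) *
  (∏ j : Fin n, ∏ k ∈ Finset.Ioi j,
      theta p (q ^ (ν k - ν j) * (xiPt (a 0) t n k / xiPt (a 0) t n j)) *
          theta p (q ^ (ν j + ν k) * (xiPt (a 0) t n j * xiPt (a 0) t n k)) /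
        (theta p (xiPt (a 0) t n k / xiPt (a 0) t n j) *
          theta p (xiPt (a 0) t n j * xiPt (a 0) t n k))) *
  (∏ i : Fin n, ∏ m : Fin 6,
      thetaPoch p q (a m * xiPt (a 0) t n i) (ν i) /
        thetaPoch p q (q * (a m)⁻¹ * xiPt (a 0) t n i) (ν i)) *
  (∏ j : Fin n, ∏ k ∈ Finset.Ioi j,
      thetaPoch p q (t * (xiPt (a 0) t n k / xiPt (a 0) t n j)) (ν k - ν j) *
          thetaPoch p q (t * (xiPt (a 0) t n j * xiPt (a 0) t n k)) (ν j + ν k) /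
        (thetaPoch p q (q * t⁻¹ * (xiPt (a 0) t n k / xiPt (a 0) t n j)) (ν k - ν j) *
          thetaPoch p q (q * t⁻¹ * (xiPt (a 0) t n j * xiPt (a 0) t n k)) (ν j + ν k)))

/-- The truncated Jackson integral `⟨φ⟩ = Σ_{0 ≤ ν₁ ≤ … ≤ ν_n ≤ N} W(ν) φ(q^ν ξ)`. -/
noncomputable def jackson (p q t : ℂ) (a : Fin 6 → ℂ) (n N : ℕ)
    (φ : (Fin n → ℂ) → ℂ) : ℂ :=
  ∑ ν ∈ Finset.univ.filter
      (fun ν : Fin n → Fin (N + 1) => ∀ i j : Fin n, i ≤ j → ν i ≤ ν j),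
    weight p q t a n (fun i => (ν i : ℕ)) *
      φ (fun i => q ^ (ν i : ℕ) * xiPt (a 0) t n i)

/-- Genericity: all theta denominators appearing in the weight `W(ν)`,
for `0 ≤ ν₁ ≤ … ≤ ν_n ≤ N`, are nonzero. -/
def weightDenomsNZ (p q t : ℂ) (a : Fin 6 → ℂ) (n N : ℕ) : Prop :=
  (∀ i : Fin n, theta p (xiPt (a 0) t n i ^ 2) ≠ 0) ∧
  (∀ j k : Fin n, j < k →
      theta p (xiPt (a 0) t n k / xiPt (a 0) t n j) ≠ 0 ∧
        theta p (xiPt (a 0) t n j * xiPt (a 0) t n k) ≠ 0) ∧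
  (∀ (m : Fin 6) (i : Fin n) (k : ℕ), k ≤ N →
      thetaPoch p q (q * (a m)⁻¹ * xiPt (a 0) t n i) k ≠ 0) ∧
  (∀ j k : Fin n, j < k → ∀ l : ℕ, l ≤ 2 * N →
      thetaPoch p q (q * t⁻¹ * (xiPt (a 0) t n k / xiPt (a 0) t n j)) l ≠ 0 ∧
        thetaPoch p q (q * t⁻¹ * (xiPt (a 0) t n j * xiPt (a 0) t n k)) l ≠ 0)

/-! Sort the `r`-subsets `S` of the indices by whether the last index `n - 1` lies in `S`.
Deleting the last index changes the rank of no other index, so the summand of `S` in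
`E_r^{(n)}` is the summand of `S \ {n - 1}` in `E_{r-1}^{(n-1)}` or `E_r^{(n-1)}`, times the one
theta ratio contributed by `n - 1`, whose rank is `#S - 1` in `S` or `n - 1 - #S` in `Sᶜ`.
The convention `E_n^{(n-1)} = 0` is automatic: `n - 1` indices have no `n`-subsets. -/

namespace Finset

variable {m : ℕ}

theorem compl_map_castSuccEmb (S : Finset (Fin m)) :
    (S.map Fin.castSuccEmb)ᶜ = insert (Fin.last m) (Sᶜ.map Fin.castSuccEmb) := by
  ext x
  induction x using Fin.lastCases <;> simp [Fin.castSucc_ne_last]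

theorem compl_insert_last_map_castSuccEmb (S : Finset (Fin m)) :
    (insert (Fin.last m) (S.map Fin.castSuccEmb))ᶜ = Sᶜ.map Fin.castSuccEmb := by
  ext x
  induction x using Fin.lastCases <;> simp [Fin.castSucc_ne_last]

theorem sum_powersetCard_succ_univ_fin {M : Type*} [AddCommMonoid M] (r : ℕ)
    (f : Finset (Fin (m + 1)) → M) :
    ∑ S ∈ powersetCard (r + 1) univ, f S =
      ∑ S ∈ powersetCard (r + 1) (univ : Finset (Fin m)), f (S.map Fin.castSuccEmb) +
        ∑ S ∈ powersetCard r (univ : Finset (Fin m)),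
          f (insert (Fin.last m) (S.map Fin.castSuccEmb)) := by
  set U := (univ : Finset (Fin m)).map Fin.castSuccEmb
  have hlast : Fin.last m ∉ U := by simp [U]
  have hdisj :
      Disjoint (powersetCard (r + 1) U) ((powersetCard r U).image (insert (Fin.last m))) := by
    refine disjoint_left.2 fun S hS hS' => ?_
    obtain ⟨T, -, rfl⟩ := mem_image.1 hS'
    exact hlast ((mem_powersetCard.1 hS).1 (mem_insert_self _ _))
  have hinj :
      Set.InjOn (insert (Fin.last m)) (powersetCard r U : Set (Finset (Fin (m + 1)))) := by
    intro s hs u hu h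
    have hs : Fin.last m ∉ s := fun h => hlast ((mem_powersetCard.1 hs).1 h)
    have hu : Fin.last m ∉ u := fun h => hlast ((mem_powersetCard.1 hu).1 h)
    rw [← erase_insert hs, h, erase_insert hu]
  rw [Fin.univ_castSuccEmb, cons_eq_insert, powersetCard_succ_insert hlast, sum_union hdisj,
    sum_image hinj, powersetCard_map, sum_map, powersetCard_map, sum_map]
  rfl

end Finset

def rankProd {M : Type*} [CommMonoid M] {k : ℕ} (f : Fin k → ℕ → M)
    (S : Finset (Fin k)) : M :=
  ∏ i ∈ S, f i #{j ∈ S | j < i}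

section rankProd

variable {M : Type*} [CommMonoid M] {m : ℕ} (f : Fin (m + 1) → ℕ → M) (S : Finset (Fin m))

theorem rankProd_map_castSuccEmb :
    rankProd f (S.map Fin.castSuccEmb) = rankProd (fun i => f i.castSucc) S := by
  simp only [rankProd, prod_map, filter_map, card_map]
  rfl

theorem rankProd_insert_last_map_castSuccEmb :
    rankProd f (insert (Fin.last m) (S.map Fin.castSuccEmb)) =
      f (Fin.last m) #S * rankProd (fun i => f i.castSucc) S := by
  have hlast : Fin.last m ∉ S.map Fin.castSuccEmb := by simp [Fin.castSucc_ne_last]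
  rw [rankProd, prod_insert hlast, ← rankProd_map_castSuccEmb]
  congr 1
  · rw [filter_insert, if_neg (lt_irrefl _), filter_true_of_mem, card_map]
    simp [Fin.castSucc_lt_last]
  · refine prod_congr rfl fun i hi => ?_
    obtain ⟨j, -, rfl⟩ := mem_map.1 hi
    have hj : ¬Fin.last m < Fin.castSuccEmb j := (Fin.castSucc_lt_last j).not_gt
    rw [filter_insert, if_neg hj]

end rankProd

noncomputable def Efactor (p t x y : ℂ) {k : ℕ} (z : Fin k → ℂ) (i : Fin k) (l : ℕ) : ℂ :=
  thetaPm p (x * t ^ ((i : ℕ) - l)) (z i) / thetaPm p (x * t ^ ((i : ℕ) - l)) (y * t ^ l)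

noncomputable def Eterm (p t a₁ a₂ : ℂ) {k : ℕ} (z : Fin k → ℂ) (S : Finset (Fin k)) : ℂ :=
  rankProd (Efactor p t a₂ a₁ z) S * rankProd (Efactor p t a₁ a₂ z) Sᶜ

theorem Efactor_comp_castSucc (p t x y : ℂ) {m : ℕ} (z : Fin (m + 1) → ℂ) :
    (fun i : Fin m => Efactor p t x y z i.castSucc) = Efactor p t x y (fun j => z j.castSucc) :=
  rfl

section Efun

variable (p t a₁ a₂ : ℂ)

theorem Efun_eq_sum_Eterm {k : ℕ} (r : ℕ) (z : Fin k → ℂ) :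
    Efun p t a₁ a₂ r z = ∑ S ∈ powersetCard r univ, Eterm p t a₁ a₂ z S :=
  rfl

theorem Efun_eq_zero_of_lt {k r : ℕ} (h : k < r) (z : Fin k → ℂ) : Efun p t a₁ a₂ r z = 0 := by
  rw [Efun_eq_sum_Eterm, powersetCard_eq_empty.2 (by simpa using h), sum_empty]

theorem Efun_mul_congr {k r : ℕ} {z : Fin k → ℂ} {x y : ℂ} (h : r ≤ k → x = y) :
    Efun p t a₁ a₂ r z * x = Efun p t a₁ a₂ r z * y := by
  rcases le_or_gt r k with hr | hr
  · rw [h hr]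
  · rw [Efun_eq_zero_of_lt p t a₁ a₂ hr, zero_mul, zero_mul]

variable {m : ℕ} (z : Fin (m + 1) → ℂ) (S : Finset (Fin m))

theorem Eterm_map_castSuccEmb :
    Eterm p t a₁ a₂ z (S.map Fin.castSuccEmb) =
      Eterm p t a₁ a₂ (fun j => z j.castSucc) S *
        (thetaPm p (a₁ * t ^ #S) (z (Fin.last m)) /
          thetaPm p (a₁ * t ^ #S) (a₂ * t ^ (m - #S))) := by
  have hS : m - (m - #S) = #S := Nat.sub_sub_self (by simpa using S.card_le_univ)
  rw [Eterm, Eterm, rankProd_map_castSuccEmb, compl_map_castSuccEmb,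
    rankProd_insert_last_map_castSuccEmb, card_compl, Fintype.card_fin, Efactor_comp_castSucc,
    Efactor_comp_castSucc, Efactor, Fin.val_last, hS]
  ring

theorem Eterm_insert_last_map_castSuccEmb :
    Eterm p t a₁ a₂ z (insert (Fin.last m) (S.map Fin.castSuccEmb)) =
      Eterm p t a₁ a₂ (fun j => z j.castSucc) S *
        (thetaPm p (a₂ * t ^ (m - #S)) (z (Fin.last m)) /
          thetaPm p (a₂ * t ^ (m - #S)) (a₁ * t ^ #S)) := by
  rw [Eterm, Eterm, rankProd_insert_last_map_castSuccEmb, compl_insert_last_map_castSuccEmb,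
    rankProd_map_castSuccEmb, Efactor_comp_castSucc, Efactor_comp_castSucc, Efactor, Fin.val_last]
  ring

theorem Efun_castSucc_recurrence (r : ℕ) :
    Efun p t a₁ a₂ r z =
      (if r = 0 then 0 else
        Efun p t a₁ a₂ (r - 1) (fun j => z j.castSucc) *
          (thetaPm p (a₂ * t ^ (m + 1 - r)) (z (Fin.last m)) /
            thetaPm p (a₂ * t ^ (m + 1 - r)) (a₁ * t ^ (r - 1)))) +
      Efun p t a₁ a₂ r (fun j => z j.castSucc) *
        (thetaPm p (a₁ * t ^ r) (z (Fin.last m)) / thetaPm p (a₁ * t ^ r) (a₂ * t ^ (m - r))) := by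
  have last_not_mem :
      ∑ S ∈ powersetCard r univ, Eterm p t a₁ a₂ z (S.map Fin.castSuccEmb) =
        Efun p t a₁ a₂ r (fun j => z j.castSucc) *
          (thetaPm p (a₁ * t ^ r) (z (Fin.last m)) /
            thetaPm p (a₁ * t ^ r) (a₂ * t ^ (m - r))) := by
    rw [Efun_eq_sum_Eterm, sum_mul]
    refine sum_congr rfl fun S hS => ?_
    rw [Eterm_map_castSuccEmb, (mem_powersetCard.1 hS).2]
  cases r with
  | zero =>
    rw [if_pos rfl, zero_add, ← last_not_mem, Efun_eq_sum_Eterm, powersetCard_zero,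
      powersetCard_zero, sum_singleton, sum_singleton, map_empty]
  | succ r =>
    rw [if_neg r.succ_ne_zero, Efun_eq_sum_Eterm, sum_powersetCard_succ_univ_fin, last_not_mem,
      add_comm, Nat.add_sub_cancel, Nat.add_sub_add_right]
    congr 1
    rw [Efun_eq_sum_Eterm, sum_mul]
    refine sum_congr rfl fun S hS => ?_
    rw [Eterm_insert_last_map_castSuccEmb, (mem_powersetCard.1 hS).2]

end Efun

/-- recurrence for the fundamental invariants,
with the conventions `E_{-1}^{(n-1)} = 0` (the `if r = 0` case) and
`E_n^{(n-1)} = 0` (automatic, since `Efun r = 0` when `r` exceeds the number of variables). -/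
theorem Efun_recurrence (n : ℕ) (hn : 2 ≤ n) (r : ℕ) (p t a₁ a₂ : ℂ) (z : Fin n → ℂ) :
    Efun p t a₁ a₂ r z =
      (if r = 0 then 0 else
        Efun p t a₁ a₂ (r - 1) (fun j : Fin (n - 1) => z ⟨(j : ℕ), by omega⟩) *
          (thetaPm p (a₂ * t ^ ((n : ℤ) - (r : ℤ))) (z ⟨n - 1, by omega⟩) /
            thetaPm p (a₂ * t ^ ((n : ℤ) - (r : ℤ))) (a₁ * t ^ ((r : ℤ) - 1)))) +
      Efun p t a₁ a₂ r (fun j : Fin (n - 1) => z ⟨(j : ℕ), by omega⟩) *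
        (thetaPm p (a₁ * t ^ (r : ℤ)) (z ⟨n - 1, by omega⟩) /
          thetaPm p (a₁ * t ^ (r : ℤ)) (a₂ * t ^ ((n : ℤ) - (r : ℤ) - 1))) := by
  obtain ⟨m, rfl⟩ : ∃ m, n = m + 1 := ⟨n - 1, by omega⟩
  rw [Efun_castSucc_recurrence p t a₁ a₂ z r]
  congr 1
  · cases r with
    | zero => rfl
    | succ r =>
      refine if_congr Iff.rfl rfl (Efun_mul_congr p t a₁ a₂ fun hr => ?_)
      rw [show ((m + 1 : ℕ) : ℤ) - (r + 1 : ℕ) = ((m + 1 - (r + 1) : ℕ) : ℤ) by omega,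
        show ((r + 1 : ℕ) : ℤ) - 1 = ((r + 1 - 1 : ℕ) : ℤ) by omega, zpow_natCast, zpow_natCast]
      rfl
  · refine Efun_mul_congr p t a₁ a₂ fun hr => ?_
    rw [show ((m + 1 : ℕ) : ℤ) - r - 1 = ((m - r : ℕ) : ℤ) by omega, zpow_natCast, zpow_natCast]
    rfl
end

section
/- Let n ≥ 1 and let p, a_1, a_2, t be nonzero complex numbers with |p| < 1, generic so that all theta denominators appearing in the fundamental invariants are nonzero. For every 0 ≤ r ≤ n, every z ∈ (ℂ*)^n and every 1 ≤ i ≤ n, the fundamental invariant satisfies the quasi-periodicity E_r(a_1, a_2; z_1, …, p z_i, …, z_n) = E_r(a_1, a_2; z_1, …, z_n)/(p z_i^2). -/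
open Finset

/-! Each summand of `E_r` is a product of factors `θ(x w^{±1}; p)/θ(x y^{±1}; p)` in which every
variable occurs in exactly one factor, so the quasi-periodicity of `E_r` reduces to that of
`w ↦ θ(x w^{±1}; p)`. This in turn is `θ(pz; p) = -z⁻¹ θ(z; p)`, obtained by splitting `θ(z; p)`
into the two convergent products `∏ (1 - pⁱ z)` and `∏ (1 - pⁱ⁺¹/z)` and peeling off the first
factor of the first one. -/

lemma multipliable_one_sub_pow_mul {p : ℂ} (hp : ‖p‖ < 1) (c : ℂ) :
    Multipliable fun i : ℕ ↦ 1 - p ^ i * c := by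
  apply multipliable_one_add_of_summable (f := fun i ↦ -(p ^ i * c))
  simpa [norm_mul] using (summable_geometric_of_lt_one (norm_nonneg _) hp).mul_right ‖c‖

lemma tprod_one_sub_pow_mul_eq {p : ℂ} (hp : ‖p‖ < 1) (c : ℂ) :
    ∏' i : ℕ, (1 - p ^ i * c) = (1 - c) * ∏' i : ℕ, (1 - p ^ i * (p * c)) := by
  rw [tprod_eq_zero_mul' ((multipliable_one_sub_pow_mul hp (p * c)).congr fun i ↦ by ring)]
  simp only [pow_zero, one_mul, pow_succ, mul_assoc]

lemma theta_eq_tprod_mul_tprod {p : ℂ} (hp : ‖p‖ < 1) (z : ℂ) :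
    theta p z = (∏' i : ℕ, (1 - p ^ i * z)) * ∏' i : ℕ, (1 - p ^ i * (p * z⁻¹)) := by
  rw [theta, ← (multipliable_one_sub_pow_mul hp z).tprod_mul
    (multipliable_one_sub_pow_mul hp (p * z⁻¹))]
  exact tprod_congr fun i ↦ by ring

lemma theta_mul_left {p z : ℂ} (hp : ‖p‖ < 1) (hp0 : p ≠ 0) (hz : z ≠ 0) :
    theta p (p * z) = -z⁻¹ * theta p z := by
  have hinv : p * (p * z)⁻¹ = z⁻¹ := by field_simp
  rw [theta_eq_tprod_mul_tprod hp, theta_eq_tprod_mul_tprod hp, hinv,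
    tprod_one_sub_pow_mul_eq hp z, tprod_one_sub_pow_mul_eq hp z⁻¹]
  have hfactor : (1 : ℂ) - z⁻¹ = -z⁻¹ * (1 - z) := by field_simp; ring
  rw [hfactor]
  ring

lemma thetaPm_mul_left {p x u : ℂ} (hp : ‖p‖ < 1) (hp0 : p ≠ 0) (hx : x ≠ 0) (hu : u ≠ 0) :
    thetaPm p x (p * u) = (p * u ^ 2)⁻¹ * thetaPm p x u := by
  have hxu : x * (p * u) = p * (x * u) := by ring
  have hxu' : x * u⁻¹ = p * (x * (p * u)⁻¹) := by field_simp
  rw [thetaPm, thetaPm, hxu, hxu', theta_mul_left hp hp0 (by positivity),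
    theta_mul_left hp hp0 (by positivity)]
  field_simp

lemma prod_thetaPm_div_update_mul_left {ι : Type*} [DecidableEq ι] {p : ℂ} (hp : ‖p‖ < 1)
    (hp0 : p ≠ 0) (s : Finset ι) {x : ι → ℂ} (hx : ∀ j, x j ≠ 0) (d z : ι → ℂ) {i : ι}
    (hzi : z i ≠ 0) :
    ∏ j ∈ s, thetaPm p (x j) (Function.update z i (p * z i) j) / d j =
      (if i ∈ s then (p * z i ^ 2)⁻¹ else 1) * ∏ j ∈ s, thetaPm p (x j) (z j) / d j := by
  split_ifs with hi
  · rw [← mul_prod_erase s _ hi, ← mul_prod_erase s _ hi, Function.update_self,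
      thetaPm_mul_left hp hp0 (hx i) hzi,
      prod_congr rfl fun j hj ↦ by rw [Function.update_of_ne (ne_of_mem_erase hj)]]
    ring
  · rw [one_mul]
    exact prod_congr rfl fun j hj ↦ by rw [Function.update_of_ne (ne_of_mem_of_not_mem hj hi)]

theorem Efun_quasi_periodicity_general (n : ℕ) (r : ℕ) (p t a₁ a₂ : ℂ)
    (hp : ‖p‖ < 1) (hp0 : p ≠ 0) (ht : t ≠ 0) (ha₁ : a₁ ≠ 0) (ha₂ : a₂ ≠ 0)
    (z : Fin n → ℂ) (hz : ∀ i, z i ≠ 0) (i : Fin n) :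
    Efun p t a₁ a₂ r (Function.update z i (p * z i)) =
      Efun p t a₁ a₂ r z / (p * (z i) ^ 2) := by
  rw [Efun, Efun, sum_div]
  refine sum_congr rfl fun S _ ↦ ?_
  rw [prod_thetaPm_div_update_mul_left hp hp0 S (fun _ ↦ by positivity) _ z (hz i),
    prod_thetaPm_div_update_mul_left hp hp0 Sᶜ (fun _ ↦ by positivity) _ z (hz i)]
  by_cases hiS : i ∈ S <;>
    simp only [hiS, mem_compl, if_true, if_false, not_true, not_false_eq_true] <;> ring

/-- quasi-periodicity of the fundamental invariants under `z_i ↦ p z_i`. -/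
theorem Efun_quasi_periodicity (n : ℕ) (hn : 1 ≤ n) (r : ℕ) (hr : r ≤ n) (p t a₁ a₂ : ℂ)
    (hp : ‖p‖ < 1) (hp0 : p ≠ 0) (ht : t ≠ 0) (ha₁ : a₁ ≠ 0) (ha₂ : a₂ ≠ 0)
    (hgen : eDenomsNZ p t a₁ a₂ n) (z : Fin n → ℂ) (hz : ∀ i, z i ≠ 0) (i : Fin n) :
    Efun p t a₁ a₂ r (Function.update z i (p * z i)) =
      Efun p t a₁ a₂ r z / (p * (z i) ^ 2) :=
  Efun_quasi_periodicity_general n r p t a₁ a₂ hp hp0 ht ha₁ ha₂ z hz i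
end

section
/- Let n ≥ 1 and let p, a_1, a_2, t be nonzero complex numbers with |p| < 1, generic so that all theta denominators appearing in the fundamental invariants are nonzero. Then for all 0 ≤ r, s ≤ n, the fundamental invariant satisfies the interpolation property E_r(a_1, a_2; ζ^{(s)}) = δ_{rs}, where δ_{rs} is the Kronecker delta. -/
/-!
Since `θ(1; p) = 0`, the factor `θ(x u^{±1}; p)` vanishes at `u = x`. At `z = ζ^{(s)}` every
summand of `E_r` indexed by a set `S` other than the initial segment `{0, …, s-1}` contains
such a factor: let `i` be the least index where `S` and the initial segment differ. If `i ∈ S`,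
then `i` has rank `s` in `S` and `z_i = a₂ t^{i-s}`; if `i ∉ S`, then `i` has rank `0` in the
complement and `z_i = a₁ t^i`. For the initial segment itself every quotient of thetas
equals `1`.
-/

open Finset

lemma theta_one (p : ℂ) : theta p 1 = 0 :=
  tprod_of_exists_eq_zero ⟨0, by simp⟩

lemma thetaPm_self (p : ℂ) {x : ℂ} (hx : x ≠ 0) : thetaPm p x x = 0 := by
  rw [thetaPm, mul_inv_cancel₀ hx, theta_one, mul_zero]

section Rank

variable {n s : ℕ} {S : Finset (Fin n)} {i : Fin n}

lemma card_filter_lt_of_forall_lt_mem_iff (h : ∀ j < i, j ∈ S ↔ (j : ℕ) < s) :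
    #(S.filter (· < i)) = min (i : ℕ) s := by
  have hS : S.filter (· < i) = univ.filter fun j : Fin n => (j : ℕ) < min (i : ℕ) s := by
    ext j
    simp only [mem_filter, mem_univ, true_and, lt_min_iff, Fin.lt_def]
    constructor
    · rintro ⟨hjS, hji⟩
      exact ⟨hji, (h j hji).1 hjS⟩
    · rintro ⟨hji, hjs⟩
      exact ⟨(h j hji).2 hjs, hji⟩
  rw [hS, Fin.card_filter_val_lt]
  omega

lemma card_compl_filter_lt_of_forall_lt_mem_iff (h : ∀ j < i, j ∈ S ↔ (j : ℕ) < s) :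
    #(Sᶜ.filter (· < i)) = i - min (i : ℕ) s := by
  have hunion : #(S.filter (· < i)) + #(Sᶜ.filter (· < i)) = i := by
    rw [← card_union_of_disjoint (disjoint_filter_filter disjoint_compl_right), ← filter_union,
      union_compl, filter_gt_eq_Iio, Fin.card_Iio]
  rw [card_filter_lt_of_forall_lt_mem_iff h] at hunion
  omega

end Rank

def initialIndices (n s : ℕ) : Finset (Fin n) := univ.filter fun j => (j : ℕ) < s

@[simp]
lemma mem_initialIndices {n s : ℕ} {j : Fin n} : j ∈ initialIndices n s ↔ (j : ℕ) < s := by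
  simp [initialIndices]

lemma card_initialIndices {n s : ℕ} (hs : s ≤ n) : #(initialIndices n s) = s := by
  rw [initialIndices, Fin.card_filter_val_lt, min_eq_right hs]

noncomputable def EfunTerm (p t a₁ a₂ : ℂ) {n : ℕ} (S : Finset (Fin n)) (z : Fin n → ℂ) : ℂ :=
  (∏ i ∈ S,
      thetaPm p (a₂ * t ^ ((i : ℕ) - #(S.filter (· < i)))) (z i) /
        thetaPm p (a₂ * t ^ ((i : ℕ) - #(S.filter (· < i)))) (a₁ * t ^ #(S.filter (· < i)))) *
  (∏ i ∈ Sᶜ,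
      thetaPm p (a₁ * t ^ ((i : ℕ) - #(Sᶜ.filter (· < i)))) (z i) /
        thetaPm p (a₁ * t ^ ((i : ℕ) - #(Sᶜ.filter (· < i)))) (a₂ * t ^ #(Sᶜ.filter (· < i))))

section Interpolation

variable {p t a₁ a₂ : ℂ} {n s : ℕ}

lemma Efun_eq_sum_EfunTerm (r : ℕ) (z : Fin n → ℂ) :
    Efun p t a₁ a₂ r z = ∑ S ∈ powersetCard r univ, EfunTerm p t a₁ a₂ S z := rfl

lemma zetaPt_of_lt {i : Fin n} (hi : (i : ℕ) < s) : zetaPt a₁ a₂ t n s i = a₁ * t ^ (i : ℕ) :=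
  if_pos hi

lemma zetaPt_of_le {i : Fin n} (hi : s ≤ (i : ℕ)) :
    zetaPt a₁ a₂ t n s i = a₂ * t ^ ((i : ℕ) - s) :=
  if_neg hi.not_gt

lemma EfunTerm_initialIndices_zetaPt (hgen : eDenomsNZ p t a₁ a₂ n) :
    EfunTerm p t a₁ a₂ (initialIndices n s) (zetaPt a₁ a₂ t n s) = 1 := by
  rw [EfunTerm, prod_eq_one fun i hi => ?_, prod_eq_one fun i hi => ?_, mul_one]
  · have hsi := le_of_not_gt (mem_initialIndices.not.1 (mem_compl.1 hi))
    rw [card_compl_filter_lt_of_forall_lt_mem_iff (fun j _ => mem_initialIndices),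
      min_eq_right hsi, zetaPt_of_le hsi]
    exact div_self (hgen _ _ (by omega) (by omega)).2
  · have his := mem_initialIndices.1 hi
    rw [card_filter_lt_of_forall_lt_mem_iff (fun j _ => mem_initialIndices), min_eq_left his.le,
      zetaPt_of_lt his]
    exact div_self (hgen _ _ (by omega) (by omega)).1

lemma EfunTerm_zetaPt_eq_zero (ht : t ≠ 0) (ha₁ : a₁ ≠ 0) (ha₂ : a₂ ≠ 0) {S : Finset (Fin n)}
    (hS : S ≠ initialIndices n s) : EfunTerm p t a₁ a₂ S (zetaPt a₁ a₂ t n s) = 0 := by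
  obtain ⟨i, hi, hmin⟩ := exists_min_image (symmDiff S (initialIndices n s)) id
    (symmDiff_nonempty.2 hS)
  have hagree : ∀ j < i, j ∈ S ↔ (j : ℕ) < s := fun j hji => by
    have hj : j ∉ symmDiff S (initialIndices n s) := fun hj => (hmin j hj).not_gt hji
    rw [mem_symmDiff] at hj
    rw [← mem_initialIndices]
    tauto
  rw [EfunTerm]
  rcases mem_symmDiff.1 hi with ⟨hiS, hi₀⟩ | ⟨hi₀, hiS⟩
  · have hsi : s ≤ (i : ℕ) := le_of_not_gt (mem_initialIndices.not.1 hi₀)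
    refine mul_eq_zero_of_left (prod_eq_zero hiS ?_) _
    rw [card_filter_lt_of_forall_lt_mem_iff hagree, min_eq_right hsi, zetaPt_of_le hsi,
      thetaPm_self p (mul_ne_zero ha₂ (pow_ne_zero _ ht)), zero_div]
  · have his : (i : ℕ) < s := mem_initialIndices.1 hi₀
    refine mul_eq_zero_of_right _ (prod_eq_zero (mem_compl.2 hiS) ?_)
    rw [card_compl_filter_lt_of_forall_lt_mem_iff hagree, min_eq_left his.le, Nat.sub_self,
      Nat.sub_zero, zetaPt_of_lt his, thetaPm_self p (mul_ne_zero ha₁ (pow_ne_zero _ ht)),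
      zero_div]

end Interpolation

theorem Efun_interpolation_general (n : ℕ) (r s : ℕ) (hs : s ≤ n)
    (p t a₁ a₂ : ℂ) (ht : t ≠ 0)
    (ha₁ : a₁ ≠ 0) (ha₂ : a₂ ≠ 0) (hgen : eDenomsNZ p t a₁ a₂ n) :
    Efun p t a₁ a₂ r (zetaPt a₁ a₂ t n s) = if r = s then (1 : ℂ) else 0 := by
  rw [Efun_eq_sum_EfunTerm]
  split_ifs with hrs
  · subst hrs
    rw [sum_eq_single_of_mem _ (mem_powersetCard_univ.2 (card_initialIndices hs))
      fun S _ hS => EfunTerm_zetaPt_eq_zero ht ha₁ ha₂ hS]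
    exact EfunTerm_initialIndices_zetaPt hgen
  · refine sum_eq_zero fun S hS => EfunTerm_zetaPt_eq_zero ht ha₁ ha₂ fun h => hrs ?_
    rw [← card_initialIndices hs, ← h, mem_powersetCard_univ.1 hS]

/-- interpolation property `E_r(ζ^{(s)}) = δ_{rs}`. -/
theorem Efun_interpolation (n : ℕ) (hn : 1 ≤ n) (r s : ℕ) (hr : r ≤ n) (hs : s ≤ n)
    (p t a₁ a₂ : ℂ) (hp : ‖p‖ < 1) (hp0 : p ≠ 0) (ht : t ≠ 0)
    (ha₁ : a₁ ≠ 0) (ha₂ : a₂ ≠ 0) (hgen : eDenomsNZ p t a₁ a₂ n) :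
    Efun p t a₁ a₂ r (zetaPt a₁ a₂ t n s) = if r = s then (1 : ℂ) else 0 :=
  Efun_interpolation_general n r s hs p t a₁ a₂ ht ha₁ ha₂ hgen
end

section
/- Let n ≥ 1 and let p, a_1, a_2, t be nonzero complex numbers with |p| < 1, generic so that all theta denominators appearing in the fundamental invariants are nonzero. Then the functions E_0(a_1, a_2; ·), E_1(a_1, a_2; ·), …, E_n(a_1, a_2; ·) on (ℂ*)^n are linearly independent over ℂ: if λ_0, …, λ_n ∈ ℂ satisfy Σ_{r=0}^n λ_r E_r(a_1, a_2; z) = 0 for all z ∈ (ℂ*)^n, then λ_0 = … = λ_n = 0. -/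
open Finset

lemma card_filter_lt_add_card_compl_filter_lt {n : ℕ} (S : Finset (Fin n)) (i : Fin n) :
    #(S.filter (· < i)) + #(Sᶜ.filter (· < i)) = i := by
  rw [← Fin.card_Iio i, ← card_filter_add_card_filter_not (s := Iio i) (· ∈ S)]
  congr 2 <;> ext j <;> simp [and_comm]

lemma exists_mem_symmDiff_filter_lt_eq {α : Type*} [LinearOrder α] {S T : Finset α}
    (h : S ≠ T) : ∃ i ∈ symmDiff S T, S.filter (· < i) = T.filter (· < i) := by
  have hne : (symmDiff S T).Nonempty := symmDiff_nonempty.mpr h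
  refine ⟨_, min'_mem _ hne, ?_⟩
  ext j
  have : j < (symmDiff S T).min' hne → j ∉ symmDiff S T := fun hj hmem =>
    (min'_le _ j hmem).not_gt hj
  simp only [mem_filter, mem_symmDiff] at this ⊢
  tauto

noncomputable def thetaBlock (p t a b : ℂ) {n : ℕ} (S : Finset (Fin n)) (z : Fin n → ℂ) : ℂ :=
  ∏ i ∈ S, thetaPm p (b * t ^ ((i : ℕ) - #(S.filter (· < i)))) (z i) /
    thetaPm p (b * t ^ ((i : ℕ) - #(S.filter (· < i)))) (a * t ^ #(S.filter (· < i)))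

lemma Efun_eq_sum_thetaBlock (p t a₁ a₂ : ℂ) {n : ℕ} (r : ℕ) (z : Fin n → ℂ) :
    Efun p t a₁ a₂ r z =
      ∑ S ∈ powersetCard r univ, thetaBlock p t a₁ a₂ S z * thetaBlock p t a₂ a₁ Sᶜ z :=
  rfl

section thetaBlock

variable {p t a b : ℂ} {n : ℕ} {S : Finset (Fin n)} {z : Fin n → ℂ}

lemma thetaBlock_eq_zero {i : Fin n} (hi : i ∈ S) (ht : t ≠ 0) (hb : b ≠ 0)
    (hz : z i = b * t ^ ((i : ℕ) - #(S.filter (· < i)))) : thetaBlock p t a b S z = 0 :=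
  prod_eq_zero hi <| by rw [hz, thetaPm_self p (mul_ne_zero hb (pow_ne_zero _ ht)), zero_div]

lemma thetaBlock_eq_one (hz : ∀ i ∈ S, z i = a * t ^ #(S.filter (· < i)))
    (hden : ∀ i ∈ S, thetaPm p (b * t ^ ((i : ℕ) - #(S.filter (· < i))))
      (a * t ^ #(S.filter (· < i))) ≠ 0) :
    thetaBlock p t a b S z = 1 :=
  prod_eq_one fun i hi => by rw [hz i hi]; exact div_self (hden i hi)

end thetaBlock

def initSeg (n s : ℕ) : Finset (Fin n) := univ.filter fun i => (i : ℕ) < s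

section initSeg

variable {n s : ℕ} {i : Fin n}

@[simp]
lemma mem_initSeg : i ∈ initSeg n s ↔ (i : ℕ) < s := by
  simp [initSeg]

lemma card_initSeg (hs : s ≤ n) : #(initSeg n s) = s := by
  simp [initSeg, Fin.card_filter_val_lt, hs]

lemma card_initSeg_filter_lt_of_mem (hi : i ∈ initSeg n s) :
    #((initSeg n s).filter (· < i)) = i := by
  have hcompl : (initSeg n s)ᶜ.filter (· < i) = ∅ :=
    filter_false_of_mem fun j hj hji =>
      mem_compl.mp hj (mem_initSeg.mpr ((Fin.lt_def.mp hji).trans (mem_initSeg.mp hi)))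
  simpa [hcompl] using card_filter_lt_add_card_compl_filter_lt (initSeg n s) i

lemma card_initSeg_filter_lt_of_notMem (hs : s ≤ n) (hi : i ∉ initSeg n s) :
    #((initSeg n s).filter (· < i)) = s := by
  rw [filter_true_of_mem, card_initSeg hs]
  intro j hj
  rw [mem_initSeg] at hi hj
  rw [Fin.lt_def]
  omega

lemma card_compl_initSeg_filter_lt_of_notMem (hs : s ≤ n) (hi : i ∉ initSeg n s) :
    #((initSeg n s)ᶜ.filter (· < i)) = i - s := by
  have := card_filter_lt_add_card_compl_filter_lt (initSeg n s) i
  rw [card_initSeg_filter_lt_of_notMem hs hi] at this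
  omega

variable {a₁ a₂ t : ℂ}

lemma zetaPt_of_mem (hi : i ∈ initSeg n s) : zetaPt a₁ a₂ t n s i = a₁ * t ^ (i : ℕ) :=
  if_pos (mem_initSeg.mp hi)

lemma zetaPt_of_notMem (hi : i ∉ initSeg n s) :
    zetaPt a₁ a₂ t n s i = a₂ * t ^ ((i : ℕ) - s) :=
  if_neg (mt mem_initSeg.mpr hi)

end initSeg

section zetaPt

variable {p t a₁ a₂ : ℂ} {n s : ℕ}

lemma zetaPt_ne_zero (ht : t ≠ 0) (ha₁ : a₁ ≠ 0) (ha₂ : a₂ ≠ 0) (i : Fin n) :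
    zetaPt a₁ a₂ t n s i ≠ 0 := by
  unfold zetaPt
  split <;> exact mul_ne_zero ‹_› (pow_ne_zero _ ht)

lemma thetaBlock_mul_thetaBlock_zetaPt_initSeg (hs : s ≤ n) (hgen : eDenomsNZ p t a₁ a₂ n) :
    thetaBlock p t a₁ a₂ (initSeg n s) (zetaPt a₁ a₂ t n s) *
      thetaBlock p t a₂ a₁ (initSeg n s)ᶜ (zetaPt a₁ a₂ t n s) = 1 := by
  rw [thetaBlock_eq_one, thetaBlock_eq_one, mul_one]
  · intro i hi
    rw [card_compl_initSeg_filter_lt_of_notMem hs (mem_compl.mp hi)]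
    exact zetaPt_of_notMem (mem_compl.mp hi)
  · intro i hi
    have hsi : s ≤ i := by simpa using hi
    rw [card_compl_initSeg_filter_lt_of_notMem hs (mem_compl.mp hi), Nat.sub_sub_self hsi]
    exact (hgen s _ (by omega) (by omega)).2
  · intro i hi
    rw [card_initSeg_filter_lt_of_mem hi]
    exact zetaPt_of_mem hi
  · intro i hi
    rw [card_initSeg_filter_lt_of_mem hi, Nat.sub_self]
    exact (hgen 0 i i.pos i.isLt).1

lemma thetaBlock_mul_thetaBlock_zetaPt_eq_zero (hs : s ≤ n) (ht : t ≠ 0) (ha₁ : a₁ ≠ 0)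
    (ha₂ : a₂ ≠ 0) {S : Finset (Fin n)} (hS : S ≠ initSeg n s) :
    thetaBlock p t a₁ a₂ S (zetaPt a₁ a₂ t n s) *
      thetaBlock p t a₂ a₁ Sᶜ (zetaPt a₁ a₂ t n s) = 0 := by
  obtain ⟨i, hi, hrank⟩ := exists_mem_symmDiff_filter_lt_eq hS
  rcases mem_symmDiff.mp hi with ⟨hiS, hi₀⟩ | ⟨hi₀, hiS⟩
  · refine mul_eq_zero_of_left (thetaBlock_eq_zero hiS ht ha₂ ?_) _
    rw [hrank, card_initSeg_filter_lt_of_notMem hs hi₀, zetaPt_of_notMem hi₀]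
  · refine mul_eq_zero_of_right _ (thetaBlock_eq_zero (mem_compl.mpr hiS) ht ha₁ ?_)
    have hrank₀ : #(Sᶜ.filter (· < i)) = 0 := by
      have := card_filter_lt_add_card_compl_filter_lt S i
      rw [hrank, card_initSeg_filter_lt_of_mem hi₀] at this
      omega
    rw [hrank₀, Nat.sub_zero, zetaPt_of_mem hi₀]

theorem Efun_zetaPt (hs : s ≤ n) (ht : t ≠ 0) (ha₁ : a₁ ≠ 0) (ha₂ : a₂ ≠ 0)
    (hgen : eDenomsNZ p t a₁ a₂ n) (r : ℕ) :
    Efun p t a₁ a₂ r (zetaPt a₁ a₂ t n s) = if r = s then 1 else 0 := by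
  have hterm : ∀ S : Finset (Fin n),
      thetaBlock p t a₁ a₂ S (zetaPt a₁ a₂ t n s) * thetaBlock p t a₂ a₁ Sᶜ (zetaPt a₁ a₂ t n s)
        = if initSeg n s = S then 1 else 0 := by
    intro S
    split_ifs with hS
    · exact hS ▸ thetaBlock_mul_thetaBlock_zetaPt_initSeg hs hgen
    · exact thetaBlock_mul_thetaBlock_zetaPt_eq_zero hs ht ha₁ ha₂ (Ne.symm hS)
  rw [Efun_eq_sum_thetaBlock, sum_congr rfl fun S _ => hterm S, sum_ite_eq]
  simp only [mem_powersetCard_univ, card_initSeg hs, eq_comm (a := s)]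

end zetaPt

theorem Efun_linearIndependent_general (n : ℕ) (p t a₁ a₂ : ℂ)
    (ht : t ≠ 0) (ha₁ : a₁ ≠ 0) (ha₂ : a₂ ≠ 0)
    (hgen : eDenomsNZ p t a₁ a₂ n) (lam : Fin (n + 1) → ℂ)
    (hlam : ∀ z : Fin n → ℂ, (∀ i, z i ≠ 0) →
      ∑ r : Fin (n + 1), lam r * Efun p t a₁ a₂ (r : ℕ) z = 0) :
    ∀ r : Fin (n + 1), lam r = 0 := by
  intro r
  simpa [Efun_zetaPt r.is_le ht ha₁ ha₂ hgen, Fin.val_inj] using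
    hlam _ (zetaPt_ne_zero (s := r) ht ha₁ ha₂)

/-- linear independence of `E_0, E_1, …, E_n` over `ℂ`. -/
theorem Efun_linearIndependent (n : ℕ) (hn : 1 ≤ n) (p t a₁ a₂ : ℂ)
    (hp : ‖p‖ < 1) (hp0 : p ≠ 0) (ht : t ≠ 0) (ha₁ : a₁ ≠ 0) (ha₂ : a₂ ≠ 0)
    (hgen : eDenomsNZ p t a₁ a₂ n) (lam : Fin (n + 1) → ℂ)
    (hlam : ∀ z : Fin n → ℂ, (∀ i, z i ≠ 0) →
      ∑ r : Fin (n + 1), lam r * Efun p t a₁ a₂ (r : ℕ) z = 0) :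
    ∀ r : Fin (n + 1), lam r = 0 :=
  Efun_linearIndependent_general n p t a₁ a₂ ht ha₁ ha₂ hgen lam hlam
end

section
/- Let n ≥ 1, 1 ≤ r ≤ n, and let p, t, a_1, …, a_6 be nonzero complex numbers with |p| < 1 satisfying a_1 a_2 a_3 a_4 a_5 a_6 t^{2n−2} = 1, generic so that all theta factors appearing in denominators are nonzero. Then F_r^+(ζ^{(r)}) = [θ(t^r; p) θ(a_1 a_2 t^{n−1}; p) θ(a_1 a_2^{−1} t^r; p)] / [(a_1 t^{r−1})^2 θ(t; p) θ(a_1 a_2^{−1} t^{−n+2r}; p)] · ∏_{m=3}^6 θ(a_m a_1 t^{r−1}; p). -/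
open Finset

private lemma tele (g : ℤ → ℂ) (e : ℤ) (m : ℕ) :
    (∏ k ∈ Finset.range m, g (e + k + 1)) * g e =
    (∏ k ∈ Finset.range m, g (e + k)) * g (e + m) := by
  induction m with
  | zero => simp
  | succ m ih =>
    rw [Finset.prod_range_succ, Finset.prod_range_succ]
    push_cast
    calc (∏ k ∈ Finset.range m, g (e + k + 1)) * g (e + m + 1) * g e
        = ((∏ k ∈ Finset.range m, g (e + k + 1)) * g e) * g (e + m + 1) := by ring
      _ = ((∏ k ∈ Finset.range m, g (e + k)) * g (e + m)) * g (e + m + 1) := by rw [ih]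
      _ = _ := by ring_nf

private lemma tele' (g : ℤ → ℂ) (e : ℤ) (m : ℕ) :
    (∏ k ∈ Finset.range m, g (e + 1 - k)) * g (e + 1 - m) =
    (∏ k ∈ Finset.range m, g (e - k)) * g (e + 1) := by
  induction m with
  | zero => simp
  | succ m ih =>
    rw [Finset.prod_range_succ, Finset.prod_range_succ]
    push_cast
    rw [show e + 1 - ((m : ℤ) + 1) = e - m by ring]
    calc (∏ k ∈ Finset.range m, g (e + 1 - k)) * g (e + 1 - m) * g (e - m)
        = ((∏ k ∈ Finset.range m, g (e + 1 - k)) * g (e + 1 - m)) * g (e - m) := by ring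
      _ = ((∏ k ∈ Finset.range m, g (e - k)) * g (e + 1)) * g (e - m) := by rw [ih]
      _ = _ := by ring

private lemma key (s u : ℕ) (p t : ℂ) (a : Fin 6 → ℂ) (ht : t ≠ 0)
    (ha0 : a 0 ≠ 0) (ha1 : a 1 ≠ 0) (hsn : s < s + 1 + u)
    (hgenF : FplusDenomNZ p (⟨s, hsn⟩ : Fin (s + 1 + u))
      (zetaPt (a 0) (a 1) t (s + 1 + u) (s + 1)))
    (hd1 : theta p t ≠ 0)
    (hd2 : theta p (a 0 * (a 1)⁻¹ * t ^ (-((s + 1 + u : ℕ) : ℤ) + 2 * ((s + 1 : ℕ) : ℤ))) ≠ 0) :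
    Fplus p t a (⟨s, hsn⟩ : Fin (s + 1 + u)) (zetaPt (a 0) (a 1) t (s + 1 + u) (s + 1)) =
      theta p (t ^ (s + 1)) * theta p (a 0 * a 1 * t ^ (s + u)) *
          theta p (a 0 * (a 1)⁻¹ * t ^ (s + 1)) /
        ((a 0 * t ^ s) ^ 2 * theta p t *
          theta p (a 0 * (a 1)⁻¹ * t ^ (-((s + 1 + u : ℕ) : ℤ) + 2 * ((s + 1 : ℕ) : ℤ)))) *
        ∏ m ∈ ({2, 3, 4, 5} : Finset (Fin 6)), theta p (a m * a 0 * t ^ s) := by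
  set i : Fin (s + 1 + u) := ⟨s, hsn⟩ with hidef
  set z : Fin (s + 1 + u) → ℂ := zetaPt (a 0) (a 1) t (s + 1 + u) (s + 1) with hz
  -- values of z
  have hzi : z i = a 0 * t ^ s := by rw [hz]; simp [zetaPt, hidef]
  have hzL : ∀ (k : ℕ) (h : k < s + 1 + u), k ≤ s → z ⟨k, h⟩ = a 0 * t ^ k := by
    intro k h hk; rw [hz]; simp [zetaPt]; omega
  have hzR : ∀ (k : ℕ) (h : s + 1 + k < s + 1 + u), z ⟨s + 1 + k, h⟩ = a 1 * t ^ k := by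
    intro k h; rw [hz]
    simp only [zetaPt]
    rw [if_neg (by omega)]
    congr 2
    omega
  -- the four theta families
  set g1 : ℤ → ℂ := fun e => theta p (a 0 ^ 2 * t ^ e) with hg1
  set g2 : ℤ → ℂ := fun e => theta p (t ^ e) with hg2
  set g3 : ℤ → ℂ := fun e => theta p (a 0 * a 1 * t ^ e) with hg3
  set g4 : ℤ → ℂ := fun e => theta p (a 0 * (a 1)⁻¹ * t ^ e) with hg4
  have hzc : ∀ (c : ℤ) (m : ℕ), c = (m : ℤ) → (t : ℂ) ^ c = t ^ m := by
    rintro c m rfl; exact zpow_natCast t m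
  have harg1 : ∀ k : ℕ, t * (a 0 * t ^ s) * (a 0 * t ^ k) = a 0 ^ 2 * t ^ ((s : ℤ) + k + 1) := by
    intro k; rw [hzc ((s : ℤ) + k + 1) (s + k + 1) (by push_cast; ring)]; ring
  have harg2 : ∀ k : ℕ, t * (a 0 * t ^ s) * (a 0 * t ^ k)⁻¹ = t ^ ((s : ℤ) + 1 - k) := by
    intro k
    rw [show (s : ℤ) + 1 - k = ((s + 1 : ℕ) : ℤ) - (k : ℤ) by push_cast; ring,
      zpow_sub₀ ht, zpow_natCast, zpow_natCast]
    field_simp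
    ring
  have harg3 : ∀ k : ℕ, t * (a 0 * t ^ s) * (a 1 * t ^ k) = a 0 * a 1 * t ^ ((s : ℤ) + k + 1) := by
    intro k; rw [hzc ((s : ℤ) + k + 1) (s + k + 1) (by push_cast; ring)]; ring
  have harg4 : ∀ k : ℕ,
      t * (a 0 * t ^ s) * (a 1 * t ^ k)⁻¹ = a 0 * (a 1)⁻¹ * t ^ ((s : ℤ) + 1 - k) := by
    intro k
    rw [show (s : ℤ) + 1 - k = ((s + 1 : ℕ) : ℤ) - (k : ℤ) by push_cast; ring,
      zpow_sub₀ ht, zpow_natCast, zpow_natCast]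
    field_simp
    ring
  have hargd1 : ∀ k : ℕ, (a 0 * t ^ s) * (a 0 * t ^ k) = a 0 ^ 2 * t ^ ((s : ℤ) + k) := by
    intro k; rw [hzc ((s : ℤ) + k) (s + k) (by push_cast; ring)]; ring
  have hargd2 : ∀ k : ℕ, (a 0 * t ^ s) * (a 0 * t ^ k)⁻¹ = t ^ ((s : ℤ) - k) := by
    intro k
    rw [show (s : ℤ) - k = ((s : ℕ) : ℤ) - (k : ℤ) by norm_num,
      zpow_sub₀ ht, zpow_natCast, zpow_natCast]
    field_simp
  have hargd3 : ∀ k : ℕ, (a 0 * t ^ s) * (a 1 * t ^ k) = a 0 * a 1 * t ^ ((s : ℤ) + k) := by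
    intro k; rw [hzc ((s : ℤ) + k) (s + k) (by push_cast; ring)]; ring
  have hargd4 : ∀ k : ℕ,
      (a 0 * t ^ s) * (a 1 * t ^ k)⁻¹ = a 0 * (a 1)⁻¹ * t ^ ((s : ℤ) - k) := by
    intro k
    rw [show (s : ℤ) - k = ((s : ℕ) : ℤ) - (k : ℤ) by norm_num,
      zpow_sub₀ ht, zpow_natCast, zpow_natCast]
    field_simp
  -- nonzero facts
  have hC : (a 0 * t ^ s) ^ 2 = a 0 ^ 2 * t ^ ((s : ℤ) + s) := by
    rw [hzc ((s : ℤ) + s) (s + s) (by push_cast; ring)]; ring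
  have hZ1 : g1 ((s : ℤ) + s) ≠ 0 := by
    have h := hgenF.1
    rw [hzi, hC] at h
    exact h
  have hD1 : ∀ k : ℕ, k < s → g1 ((s : ℤ) + k) * g2 ((s : ℤ) - k) ≠ 0 := by
    intro k hk
    have h2 := hgenF.2 ⟨k, by omega⟩ (by simp [hidef, Fin.ext_iff]; omega)
    rw [thetaPm, hzi, hzL k (by omega) (by omega), hargd1, hargd2] at h2
    exact h2
  have hD2 : ∀ k : ℕ, k < u → g3 ((s : ℤ) + k) * g4 ((s : ℤ) - k) ≠ 0 := by
    intro k hk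
    have h2 := hgenF.2 ⟨s + 1 + k, by omega⟩ (by simp [hidef, Fin.ext_iff]; omega)
    rw [thetaPm, hzi, hzR k (by omega), hargd3, hargd4] at h2
    exact h2
  have hG2 : g2 1 ≠ 0 := by
    rw [hg2]; simpa using hd1
  have hG4 : g4 ((s : ℤ) + 1 - u) ≠ 0 := by
    rw [hg4]
    rwa [show (-((s + 1 + u : ℕ) : ℤ) + 2 * ((s + 1 : ℕ) : ℤ)) = (s : ℤ) + 1 - u by
      push_cast; ring] at hd2
  -- per-factor values
  set FL : ℕ → ℂ := fun k =>
    g1 ((s : ℤ) + k + 1) * g2 ((s : ℤ) + 1 - k) / (g1 ((s : ℤ) + k) * g2 ((s : ℤ) - k)) with hFL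
  set FR : ℕ → ℂ := fun k =>
    g3 ((s : ℤ) + k + 1) * g4 ((s : ℤ) + 1 - k) / (g3 ((s : ℤ) + k) * g4 ((s : ℤ) - k)) with hFR
  have hLfac : ∀ (k : ℕ) (h : k < s + 1 + u), k < s →
      thetaPm p (t * z i) (z ⟨k, h⟩) / thetaPm p (z i) (z ⟨k, h⟩) = FL k := by
    intro k h hk
    rw [thetaPm, thetaPm, hzi, hzL k h (by omega), harg1, harg2, hargd1, hargd2, hFL]
  have hRfac : ∀ (k : ℕ) (h : s + 1 + k < s + 1 + u),
      thetaPm p (t * z i) (z ⟨s + 1 + k, h⟩) / thetaPm p (z i) (z ⟨s + 1 + k, h⟩) = FR k := by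
    intro k h
    rw [thetaPm, thetaPm, hzi, hzR k h, harg3, harg4, hargd3, hargd4, hFR]
  -- split of the product over j ≠ i
  have hsplit : (∏ j ∈ Finset.univ.erase i,
        thetaPm p (t * z i) (z j) / thetaPm p (z i) (z j)) =
      (∏ k ∈ Finset.range s, FL k) * ∏ k ∈ Finset.range u, FR k := by
    set f : Fin (s + 1 + u) → ℂ :=
      fun j => thetaPm p (t * z i) (z j) / thetaPm p (z i) (z j) with hf
    set G : ℕ → ℂ :=
      fun k => if h : k < s + 1 + u then (if k = s then 1 else f ⟨k, h⟩) else 1 with hG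
    have h0 : ∀ j : Fin (s + 1 + u), j ≠ i → G (j : ℕ) = f j := by
      intro j hj
      rw [hG]
      have hjs : (j : ℕ) ≠ s := by
        intro hc; exact hj (by rw [hidef]; exact Fin.ext hc)
      simp only [j.isLt, dif_pos, if_neg hjs]
    have h1 : ∏ j ∈ Finset.univ.erase i, f j = ∏ k ∈ Finset.range (s + 1 + u), G k := by
      rw [← Fin.prod_univ_eq_prod_range]
      rw [← Finset.mul_prod_erase Finset.univ (fun j : Fin (s + 1 + u) => G (j : ℕ))
        (Finset.mem_univ i)]
      rw [show G ((i : Fin (s + 1 + u)) : ℕ) = 1 by rw [hG]; simp [hidef]]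
      rw [one_mul]
      refine (Finset.prod_congr rfl fun j hj => ?_).symm
      exact h0 j (Finset.mem_erase.mp hj).1
    rw [h1, Finset.prod_range_add, Finset.prod_range_succ]
    congr 1
    · rw [show G s = 1 by rw [hG]; simp]
      rw [mul_one]
      refine Finset.prod_congr rfl fun k hk => ?_
      have hks : k < s := Finset.mem_range.mp hk
      rw [hG]
      simp only [show k < s + 1 + u by omega, dif_pos, if_neg (by omega : ¬ k = s)]
      exact hLfac k (by omega) hks
    · refine Finset.prod_congr rfl fun k hk => ?_
      have hku : k < u := Finset.mem_range.mp hk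
      rw [hG]
      simp only [show s + 1 + k < s + 1 + u by omega, dif_pos,
        if_neg (by omega : ¬ s + 1 + k = s)]
      exact hRfac k (by omega)
  -- head product
  set M : ℂ := ∏ m ∈ ({2, 3, 4, 5} : Finset (Fin 6)), theta p (a m * a 0 * t ^ s) with hM
  have hMval : M = theta p (a 2 * a 0 * t ^ s) * theta p (a 3 * a 0 * t ^ s) *
      theta p (a 4 * a 0 * t ^ s) * theta p (a 5 * a 0 * t ^ s) := by
    rw [hM]
    simp [Finset.prod_insert, Finset.mem_insert, Finset.mem_singleton]
    ring
  have hhead : (∏ m : Fin 6, theta p (a m * z i)) = g1 (s : ℤ) * g3 (s : ℤ) * M := by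
    rw [Fin.prod_univ_six, hzi]
    rw [show a 0 * (a 0 * t ^ s) = a 0 ^ 2 * t ^ ((s : ℤ)) by rw [zpow_natCast]; ring]
    rw [show a 1 * (a 0 * t ^ s) = a 0 * a 1 * t ^ ((s : ℤ)) by rw [zpow_natCast]; ring]
    rw [show a 2 * (a 0 * t ^ s) = a 2 * a 0 * t ^ s by ring]
    rw [show a 3 * (a 0 * t ^ s) = a 3 * a 0 * t ^ s by ring]
    rw [show a 4 * (a 0 * t ^ s) = a 4 * a 0 * t ^ s by ring]
    rw [show a 5 * (a 0 * t ^ s) = a 5 * a 0 * t ^ s by ring]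
    rw [hMval]
    rw [show theta p (a 0 ^ 2 * t ^ ((s : ℤ))) = g1 ((s : ℤ)) from rfl]
    rw [show theta p (a 0 * a 1 * t ^ ((s : ℤ))) = g3 ((s : ℤ)) from rfl]
    ring
  -- rewrite the goal
  simp only [Fplus]
  rw [hhead, hsplit, hzi, hC]
  rw [show theta p (a 0 ^ 2 * t ^ ((s : ℤ) + s)) = g1 ((s : ℤ) + s) from rfl]
  rw [show theta p (t ^ (s + 1)) = g2 ((s : ℤ) + 1) by
    simp only [hg2]; congr 1]
  rw [show theta p (a 0 * a 1 * t ^ (s + u)) = g3 ((s : ℤ) + u) by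
    simp only [hg3]; congr 1]
  rw [show theta p (a 0 * (a 1)⁻¹ * t ^ (s + 1)) = g4 ((s : ℤ) + 1) by
    simp only [hg4]; congr 1]
  rw [show theta p t = g2 1 by simp only [hg2]; norm_num]
  rw [show theta p (a 0 * (a 1)⁻¹ * t ^ (-((s + 1 + u : ℕ) : ℤ) + 2 * ((s + 1 : ℕ) : ℤ))) =
      g4 ((s : ℤ) + 1 - u) by
    simp only [hg4]; congr 2; push_cast; ring_nf]
  -- expand the range products
  have hFLprod : ∏ k ∈ Finset.range s, FL k =
      ((∏ k ∈ Finset.range s, g1 ((s : ℤ) + k + 1)) *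
        ∏ k ∈ Finset.range s, g2 ((s : ℤ) + 1 - k)) /
      ((∏ k ∈ Finset.range s, g1 ((s : ℤ) + k)) *
        ∏ k ∈ Finset.range s, g2 ((s : ℤ) - k)) := by
    simp only [hFL]
    rw [Finset.prod_div_distrib, Finset.prod_mul_distrib, Finset.prod_mul_distrib]
  have hFRprod : ∏ k ∈ Finset.range u, FR k =
      ((∏ k ∈ Finset.range u, g3 ((s : ℤ) + k + 1)) *
        ∏ k ∈ Finset.range u, g4 ((s : ℤ) + 1 - k)) /
      ((∏ k ∈ Finset.range u, g3 ((s : ℤ) + k)) *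
        ∏ k ∈ Finset.range u, g4 ((s : ℤ) - k)) := by
    simp only [hFR]
    rw [Finset.prod_div_distrib, Finset.prod_mul_distrib, Finset.prod_mul_distrib]
  have hP12 : (∏ k ∈ Finset.range s, g1 ((s : ℤ) + k)) *
      (∏ k ∈ Finset.range s, g2 ((s : ℤ) - k)) ≠ 0 := by
    rw [← Finset.prod_mul_distrib]
    exact Finset.prod_ne_zero_iff.mpr fun k hk => hD1 k (Finset.mem_range.mp hk)
  have hP34 : (∏ k ∈ Finset.range u, g3 ((s : ℤ) + k)) *
      (∏ k ∈ Finset.range u, g4 ((s : ℤ) - k)) ≠ 0 := by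
    rw [← Finset.prod_mul_distrib]
    exact Finset.prod_ne_zero_iff.mpr fun k hk => hD2 k (Finset.mem_range.mp hk)
  have hCne : a 0 ^ 2 * t ^ ((s : ℤ) + s) ≠ 0 :=
    mul_ne_zero (pow_ne_zero _ ha0) (zpow_ne_zero _ ht)
  -- the telescoping identities
  have E1 := tele g1 (s : ℤ) s
  have E2 := tele' g2 (s : ℤ) s
  rw [show (s : ℤ) + 1 - (s : ℤ) = 1 by ring] at E2
  have E3 := tele g3 (s : ℤ) u
  have E4 := tele' g4 (s : ℤ) u
  have hstar : (g1 (s : ℤ) * g3 (s : ℤ)) *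
      (((∏ k ∈ Finset.range s, g1 ((s : ℤ) + k + 1)) *
          ∏ k ∈ Finset.range s, g2 ((s : ℤ) + 1 - k)) *
        ((∏ k ∈ Finset.range u, g3 ((s : ℤ) + k + 1)) *
          ∏ k ∈ Finset.range u, g4 ((s : ℤ) + 1 - k))) *
      (g2 1 * g4 ((s : ℤ) + 1 - u)) =
      (g2 ((s : ℤ) + 1) * g3 ((s : ℤ) + u) * g4 ((s : ℤ) + 1)) * g1 ((s : ℤ) + s) *
      (((∏ k ∈ Finset.range s, g1 ((s : ℤ) + k)) *
          ∏ k ∈ Finset.range s, g2 ((s : ℤ) - k)) *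
        ((∏ k ∈ Finset.range u, g3 ((s : ℤ) + k)) *
          ∏ k ∈ Finset.range u, g4 ((s : ℤ) - k))) := by
    calc (g1 (s : ℤ) * g3 (s : ℤ)) *
        (((∏ k ∈ Finset.range s, g1 ((s : ℤ) + k + 1)) *
            ∏ k ∈ Finset.range s, g2 ((s : ℤ) + 1 - k)) *
          ((∏ k ∈ Finset.range u, g3 ((s : ℤ) + k + 1)) *
            ∏ k ∈ Finset.range u, g4 ((s : ℤ) + 1 - k))) *
        (g2 1 * g4 ((s : ℤ) + 1 - u)) =
        ((∏ k ∈ Finset.range s, g1 ((s : ℤ) + k + 1)) * g1 (s : ℤ)) *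
          (((∏ k ∈ Finset.range s, g2 ((s : ℤ) + 1 - k)) * g2 1) *
            (((∏ k ∈ Finset.range u, g3 ((s : ℤ) + k + 1)) * g3 (s : ℤ)) *
              ((∏ k ∈ Finset.range u, g4 ((s : ℤ) + 1 - k)) * g4 ((s : ℤ) + 1 - u)))) := by ring
      _ = ((∏ k ∈ Finset.range s, g1 ((s : ℤ) + k)) * g1 ((s : ℤ) + s)) *
          (((∏ k ∈ Finset.range s, g2 ((s : ℤ) - k)) * g2 ((s : ℤ) + 1)) *
            (((∏ k ∈ Finset.range u, g3 ((s : ℤ) + k)) * g3 ((s : ℤ) + u)) *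
              ((∏ k ∈ Finset.range u, g4 ((s : ℤ) - k)) * g4 ((s : ℤ) + 1)))) := by rw [E1, E2, E3, E4]
      _ = _ := by ring
  rw [hFLprod, hFRprod]
  have hP1 := left_ne_zero_of_mul hP12
  have hP2 := right_ne_zero_of_mul hP12
  have hP3 := left_ne_zero_of_mul hP34
  have hP4 := right_ne_zero_of_mul hP34
  field_simp
  linear_combination M * hstar

/-- the value `c_{r,r} = F_r^+(ζ^{(r)})`. -/
theorem Fplus_value_at_zeta_r (n : ℕ) (hn : 1 ≤ n) (r : ℕ) (hr1 : 1 ≤ r) (hr2 : r ≤ n)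
    (p t : ℂ) (a : Fin 6 → ℂ) (hp : ‖p‖ < 1) (hp0 : p ≠ 0) (ht : t ≠ 0)
    (ha : ∀ m, a m ≠ 0)
    (hbal : a 0 * a 1 * a 2 * a 3 * a 4 * a 5 * t ^ (2 * n - 2) = 1)
    (hgenF : FplusDenomNZ p (⟨r - 1, by omega⟩ : Fin n) (zetaPt (a 0) (a 1) t n r))
    (hd1 : theta p t ≠ 0)
    (hd2 : theta p (a 0 * (a 1)⁻¹ * t ^ (-(n : ℤ) + 2 * (r : ℤ))) ≠ 0) :
    Fplus p t a (⟨r - 1, by omega⟩ : Fin n) (zetaPt (a 0) (a 1) t n r) =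
      theta p (t ^ r) * theta p (a 0 * a 1 * t ^ (n - 1)) *
          theta p (a 0 * (a 1)⁻¹ * t ^ r) /
        ((a 0 * t ^ (r - 1)) ^ 2 * theta p t *
          theta p (a 0 * (a 1)⁻¹ * t ^ (-(n : ℤ) + 2 * (r : ℤ)))) *
        ∏ m ∈ ({2, 3, 4, 5} : Finset (Fin 6)), theta p (a m * a 0 * t ^ (r - 1)) := by
  obtain ⟨s, rfl⟩ : ∃ s, r = s + 1 := ⟨r - 1, by omega⟩
  obtain ⟨u, rfl⟩ : ∃ u, n = s + 1 + u := ⟨n - (s + 1), by omega⟩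
  have h := key s u p t a ht (ha 0) (ha 1) (by omega) (by exact hgenF) hd1 (by exact hd2)
  rw [show s + 1 + u - 1 = s + u from by omega]
  simp only [Nat.add_sub_cancel]
  exact h
end
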